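/- arXiv:2303.12857 — 2 statements merged into one kernel-verified Lean document; each statement's English description precedes it below -/
import Mathlib

section
/- Let K be a compact metric space, V a topological space with a metric d, and f : K → V continuous and injective. Assume: (a) there exist r > 0 such that for every x ∈ K, the ball B(f(x), r) in V is contained in some open set in which every loop is null-homotopic in V; (b) for every δ > 0 there exists η > 0 such that any two points x, y ∈ K with d(x, y) < η are joined by a continuous path in K whose image has diameter less than δ. Then there exists ε > 0 such that for every continuous map g : K → V that is ε-close to f, every double point of g has a double point loop which is null-homotopic in V. (Precisely: if g(x) = g(y) with x ≠ y, there is a path α from x to y in K such that the loop g ∘ α is null-homotopic in V.) -/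
/-!
A continuous injection of a compact metric space is a uniform embedding, so if `g` is uniformly
close enough to `f` then `g x = g y` forces `x` and `y` to be close. Condition (b) then joins them
by a path of small diameter, which `g` maps into the ball `B(f x, r)` of condition (a), where the
resulting loop is null-homotopic.
-/

open Set Metric

theorem Continuous.isUniformInducing_of_injective {α β : Type*} [UniformSpace α]
    [CompactSpace α] [UniformSpace β] [T2Space β] {f : α → β} (hf : Continuous f)
    (hinj : Function.Injective f) : IsUniformInducing f := by
  have hemb := (hf.isClosedEmbedding hinj).isEmbedding
  have : CompactSpace (range f) := isCompact_iff_compactSpace.mp (isCompact_range hf)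
  have he : hemb.toHomeomorph.symm ∘ Set.rangeFactorization f = id :=
    funext hemb.toHomeomorph_symm_apply
  rw [← isUniformInducing_rangeFactorization_iff]
  refine .of_comp (CompactSpace.uniformContinuous_of_continuous hf).rangeFactorization
    (CompactSpace.uniformContinuous_of_continuous hemb.toHomeomorph.symm.continuous) ?_
  rw [he]
  exact .id

theorem Path.range_subset_ball_of_diam_lt {X : Type*} [PseudoMetricSpace X] {x y : X}
    (α : Path x y) {δ : ℝ} (hα : diam (range α) < δ) : range α ⊆ ball x δ := by
  rintro _ ⟨t, rfl⟩
  exact (dist_le_diam_of_mem (isCompact_range α.continuous).isBounded ⟨t, rfl⟩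
    ⟨0, α.source⟩).trans_lt hα

theorem Path.homotopic_cast_refl_of_range_subset {X : Type*} [TopologicalSpace X] {U : Set X}
    (hU : ∀ (p : X) (γ : Path p p), range γ ⊆ U → γ.Homotopic (Path.refl p))
    {a b : X} (γ : Path a b) (h : a = b) (hγ : range γ ⊆ U) :
    γ.Homotopic ((Path.refl a).cast rfl h.symm) := by
  subst h
  exact hU a γ hγ

theorem pi1_null_approx
    {K V : Type*} [MetricSpace K] [CompactSpace K] [MetricSpace V]
    (f : K → V) (hf : Continuous f) (hinj : Function.Injective f)
    -- (a): a uniform radius r such that each ball B(f x, r) lies in an open set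
    -- all of whose loops are null-homotopic in V
    (ha : ∃ r > 0, ∀ x : K, ∃ U : Set V, IsOpen U ∧ Metric.ball (f x) r ⊆ U ∧
      ∀ (p : V) (γ : Path p p), Set.range γ ⊆ U → γ.Homotopic (Path.refl p))
    -- (b): uniformly small paths between nearby points
    (hb : ∀ δ > 0, ∃ η > 0, ∀ x y : K, dist x y < η →
      ∃ α : Path x y, Metric.diam (Set.range α) < δ) :
    ∃ ε > 0, ∀ g : C(K, V), (∀ z, dist (g z) (f z) < ε) →
      ∀ x y : K, x ≠ y → (h : g x = g y) →
        ∃ α : Path x y,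
          (α.map g.continuous).Homotopic ((Path.refl (g x)).cast rfl h.symm) := by
  obtain ⟨r, hr, hU⟩ := ha
  obtain ⟨δ, hδ, hfδ⟩ := uniformContinuous_iff.mp
    (CompactSpace.uniformContinuous_of_continuous hf) (r / 2) (half_pos hr)
  obtain ⟨η, hη, hsmall⟩ := hb δ hδ
  obtain ⟨ρ, hρ, hfη⟩ :=
    (isUniformInducing_iff.mp (hf.isUniformInducing_of_injective hinj)).2 η hη
  refine ⟨min (r / 2) (ρ / 2), by positivity, fun g hg x y _ h => ?_⟩
  have hfxy : dist (f x) (f y) < ρ := calc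
    dist (f x) (f y) ≤ dist (g x) (f x) + dist (g y) (f y) := h ▸ dist_triangle_left _ _ _
    _ < ρ / 2 + ρ / 2 :=
      add_lt_add ((hg x).trans_le (min_le_right ..)) ((hg y).trans_le (min_le_right ..))
    _ = ρ := add_halves ρ
  obtain ⟨α, hα⟩ := hsmall x y (hfη hfxy)
  obtain ⟨U, -, hball, hnull⟩ := hU x
  refine ⟨α, (α.map g.continuous).homotopic_cast_refl_of_range_subset hnull h ?_⟩
  rintro _ ⟨t, rfl⟩
  apply hball
  have hαt : dist (α t) x < δ := α.range_subset_ball_of_diam_lt hα ⟨t, rfl⟩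
  calc dist (g (α t)) (f x)
      ≤ dist (g (α t)) (f (α t)) + dist (f (α t)) (f x) := dist_triangle ..
    _ < r / 2 + r / 2 := add_lt_add ((hg _).trans_le (min_le_left ..)) (hfδ hαt)
    _ = r := add_halves r
end

section
/- Let G be a group, N the additive subgroup of ℤ[G] generated by {1} ∪ {g + g⁻¹ : g ∈ G}, and let r ∈ ℤ[G] with coefficients λ_g satisfying λ_g = λ_{g⁻¹} for all g and λ_1 = 0. Then the class of r in ℤ[G]/N equals the class of Σ_{t ∈ T} λ_t · t, where T = { t ∈ G : t² = 1 and t ≠ 1 } is the set of elements of order 2. In particular, 2·[r] = 0 in ℤ[G]/N. -/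
open scoped Classical

/-- The additive subgroup of `ℤ[G]` generated by `1` and the elements
`g + g⁻¹` for `g ∈ G`. -/
noncomputable def fqRelations (G : Type*) [Group G] :
    AddSubgroup (MonoidAlgebra ℤ G) :=
  AddSubgroup.closure
    ({MonoidAlgebra.of ℤ G 1} ∪
      { x | ∃ g : G, x = MonoidAlgebra.of ℤ G g + MonoidAlgebra.of ℤ G g⁻¹ })

lemma fq_pair_mem {G : Type*} [Group G] (g : G) (c : ℤ) :
    MonoidAlgebra.single g c + MonoidAlgebra.single g⁻¹ c ∈ fqRelations G := by
  have h : MonoidAlgebra.of ℤ G g + MonoidAlgebra.of ℤ G g⁻¹ ∈ fqRelations G :=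
    AddSubgroup.subset_closure (Or.inr ⟨g, rfl⟩)
  have h2 := AddSubgroup.zsmul_mem _ h c
  convert h2 using 1
  simp [MonoidAlgebra.of_apply, smul_add, MonoidAlgebra.smul_single]

theorem symmetric_elt_reduces_to_order_two_part {G : Type*} [Group G]
    (r : MonoidAlgebra ℤ G) (hsym : ∀ g : G, r.coeff g = r.coeff g⁻¹) (h1 : r.coeff 1 = 0) :
    (QuotientAddGroup.mk (s := fqRelations G) r : MonoidAlgebra ℤ G ⧸ fqRelations G)
      = QuotientAddGroup.mk (s := fqRelations G)
          (∑ t ∈ r.coeff.support.filter (fun t => t ^ 2 = 1 ∧ t ≠ 1),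
            MonoidAlgebra.single t (r.coeff t)) ∧
    (2 : ℤ) • (QuotientAddGroup.mk (s := fqRelations G) r
        : MonoidAlgebra ℤ G ⧸ fqRelations G) = 0 := by
  classical
  set N := fqRelations G with hN
  let φ : MonoidAlgebra ℤ G →+ MonoidAlgebra ℤ G ⧸ N := QuotientAddGroup.mk' N
  have hφ : ∀ x, φ x = QuotientAddGroup.mk (s := N) x := fun x => rfl
  have hpair : ∀ (g : G) (c : ℤ), φ (MonoidAlgebra.single g c) + φ (MonoidAlgebra.single g⁻¹ c) = 0 := by
    intro g c
    rw [← map_add]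
    exact (QuotientAddGroup.eq_zero_iff _).2 (fq_pair_mem g c)
  -- r as a sum of singles over its support
  have hr : r = ∑ t ∈ r.coeff.support, MonoidAlgebra.single t (r.coeff t) := by
    conv_lhs => rw [← MonoidAlgebra.sum_coeff_single r]
    rfl
  have hsplit :
      (∑ t ∈ r.coeff.support.filter (fun t => t ^ 2 = 1 ∧ t ≠ 1), φ (MonoidAlgebra.single t (r.coeff t)))
        + ∑ t ∈ r.coeff.support.filter (fun t => ¬(t ^ 2 = 1 ∧ t ≠ 1)), φ (MonoidAlgebra.single t (r.coeff t))
        = φ r := by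
    rw [Finset.sum_filter_add_sum_filter_not, ← map_sum, ← hr]
  have hzero : ∑ t ∈ r.coeff.support.filter (fun t => ¬(t ^ 2 = 1 ∧ t ≠ 1)),
      φ (MonoidAlgebra.single t (r.coeff t)) = 0 := by
    apply Finset.sum_involution (g := fun a _ => a⁻¹)
    · intro a ha
      rw [← hsym a]
      exact hpair a (r.coeff a)
    · intro a ha _
      simp only [Finset.mem_filter, Finsupp.mem_support_iff] at ha
      have hane : a ≠ 1 := fun h => ha.1 (h ▸ h1)
      have : a ^ 2 ≠ 1 := fun h => ha.2 ⟨h, hane⟩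
      intro he
      exact this (by rw [sq]; nth_rewrite 2 [← he]; exact mul_inv_cancel a)
    · intro a ha
      exact inv_inv a
    · intro a ha
      simp only [Finset.mem_filter, Finsupp.mem_support_iff] at ha ⊢
      refine ⟨by rw [← hsym a]; exact ha.1, ?_⟩
      rintro ⟨h2, hne⟩
      have hane : a ≠ 1 := fun h => ha.1 (h ▸ h1)
      exact ha.2 ⟨by rw [← inv_inv a, inv_pow, h2, inv_one], hane⟩
  have hmain : φ r = φ (∑ t ∈ r.coeff.support.filter (fun t => t ^ 2 = 1 ∧ t ≠ 1),
      MonoidAlgebra.single t (r.coeff t)) := by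
    rw [map_sum, ← hsplit, hzero, add_zero]
  refine ⟨hmain, ?_⟩
  rw [← hφ, hmain, map_sum, Finset.smul_sum]
  apply Finset.sum_eq_zero
  intro t ht
  simp only [Finset.mem_filter] at ht
  have htt : t⁻¹ = t := by
    rw [inv_eq_iff_mul_eq_one, ← sq]; exact ht.2.1
  have := hpair t (r.coeff t)
  rw [htt] at this
  rw [two_smul]
  exact this
end
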